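/- Let A be a discrete p-primary module of cofinite type over a profinite group G with a G-stable twisting: for s ∈ Z_p let Z_p(s) be Z_p with γ ∈ G ≅ Z_p acting by multiplication by κ(γ)^s for a fixed isomorphism κ: G ≅ 1 + pZ_p, and A(s) = A ⊗ Z_p(s). If M is a cofinitely generated torsion Z_p[[G]]-module (G ≅ Z_p), then for all but finitely many s ∈ Z_p, the invariants (M(s))^G are finite. -/

import Mathlib

/-!
For `c ≡ 1` modulo the maximal ideal, `c(1 + X) - 1` is a unit times `X - a` with `c(1 + a) = 1`,
so Weierstrass division identifies `A⟦X⟧/(c(1 + X) - 1)` with `A` through evaluation at `a`.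
If `f ≠ 0` annihilates `M`, then `M/(c(1 + X) - 1)M` is a finitely generated module over
`A/(f(a))`, hence finite once `f(a) ≠ 0`. Weierstrass preparation writes `f = b P u` with
`b ≠ 0`, `P` a distinguished polynomial and `u` a unit, so `f(a) = 0` forces `P(a) = 0`: finitely
many `a`, hence finitely many `c`.
-/

open IsLocalRing

theorem subsingleton_setOf_mul_eq_one {α : Type*} [CommMonoid α] (x : α) :
    {c : α | c * x = 1}.Subsingleton :=
  fun _ hc _ hc' => left_inv_eq_right_inv hc (by rw [mul_comm]; exact hc')

theorem Polynomial.isDistinguishedAt_X_sub_C {A : Type*} [CommRing A] {I : Ideal A} {a : A}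
    (ha : a ∈ I) : (X - C a).IsDistinguishedAt I where
  mem {n} hn := by
    nontriviality A
    rw [natDegree_X_sub_C, Nat.lt_one_iff] at hn
    subst hn
    simpa using I.neg_mem ha
  monic := monic_X_sub_C a

theorem IsLocalRing.exists_mul_one_add_eq_one {A : Type*} [CommRing A] [IsLocalRing A] {c : A}
    (hc : c - 1 ∈ maximalIdeal A) : ∃ a ∈ maximalIdeal A, c * (1 + a) = 1 := by
  have hu : IsUnit c := by
    rw [← notMem_maximalIdeal]
    intro h
    exact (maximalIdeal.isMaximal A).ne_top ((Ideal.eq_top_iff_one _).mpr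
      (by simpa using Ideal.sub_mem _ h hc))
  obtain ⟨u, rfl⟩ := hu
  refine ⟨↑u⁻¹ - 1, ?_, by rw [add_sub_cancel, Units.mul_inv]⟩
  have h : (↑u⁻¹ - 1 : A) = -(↑u⁻¹ * (↑u - 1)) := by rw [mul_sub, Units.inv_mul]; ring
  rw [h]
  exact neg_mem (Ideal.mul_mem_left _ _ hc)

theorem IsDiscreteValuationRing.finite_quotient {R : Type*} [CommRing R] [IsDomain R]
    [IsDiscreteValuationRing R] [Finite (ResidueField R)] {I : Ideal R} (hI : I ≠ ⊥) :
    Finite (R ⧸ I) := by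
  obtain ⟨ϖ, hϖ⟩ := IsDiscreteValuationRing.exists_irreducible R
  obtain ⟨n, rfl⟩ := IsDiscreteValuationRing.ideal_eq_span_pow_irreducible hI hϖ
  refine finite_quotient_iff.mpr ⟨n, ?_⟩
  rw [(IsDiscreteValuationRing.irreducible_iff_uniformizer ϖ).mp hϖ, Ideal.span_singleton_pow]

theorem finite_quotient_ker_sup_span {R S F : Type*} [CommRing R] [CommRing S] [FunLike F R S]
    [RingHomClass F R S] {φ : F} (hφ : Function.Surjective φ) (f : R)
    [Finite (S ⧸ Ideal.span {φ f})] :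
    Finite (R ⧸ (RingHom.ker φ ⊔ Ideal.span {f})) := by
  have h : Ideal.comap φ (Ideal.span {φ f}) = RingHom.ker φ ⊔ Ideal.span {f} := by
    rw [← Set.image_singleton, ← Ideal.map_span, Ideal.comap_map_of_surjective' _ hφ, sup_comm]
  exact Finite.of_injective _
    (Ideal.quotientMap_injective' (f := (φ : R →+* S)) (H := h.ge) h.le)

theorem finite_quotient_smul_top_of_mem_annihilator {R M : Type*} [CommRing R] [AddCommGroup M]
    [Module R M] [Module.Finite R M] {I : Ideal R} {f : R}
    (hf : f ∈ Module.annihilator R M) [Finite (R ⧸ (I ⊔ Ideal.span {f}))] :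
    Finite (M ⧸ I • (⊤ : Submodule R M)) := by
  have h : (I ⊔ Ideal.span {f}) • (⊤ : Submodule R M) = I • ⊤ := by
    rw [Submodule.sup_smul, sup_eq_left]
    rw [← Submodule.annihilator_top, ← Ideal.span_singleton_le_iff_mem] at hf
    exact ((Submodule.smul_mono_left hf).trans (Submodule.annihilator_smul ⊤).le).trans bot_le
  rw [← h]
  exact Module.finite_of_finite (R ⧸ (I ⊔ Ideal.span {f}))

namespace PowerSeries

variable {A : Type*} [CommRing A]

theorem C_dvd_of_forall_dvd_coeff {r : A} {f : PowerSeries A} (h : ∀ n, r ∣ coeff n f) :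
    C r ∣ f := by
  choose g hg using h
  exact ⟨mk g, by ext n; rw [coeff_C_mul, coeff_mk, hg]⟩

-- Weierstrass preparation, after pulling out the content: a power of a uniformizer.
theorem exists_eq_C_mul_mul_isUnit [IsDomain A] [IsDiscreteValuationRing A]
    [IsAdicComplete (maximalIdeal A) A] {f : PowerSeries A} (hf : f ≠ 0) :
    ∃ (b : A) (P : Polynomial A) (u : PowerSeries A), b ≠ 0 ∧
      P.IsDistinguishedAt (maximalIdeal A) ∧ IsUnit u ∧ f = C b * P * u := by
  obtain ⟨ϖ, hϖ⟩ := IsDiscreteValuationRing.exists_irreducible A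
  have hϖC : ¬IsUnit (C ϖ) := by
    rw [isUnit_iff_constantCoeff, constantCoeff_C]
    exact hϖ.not_isUnit
  obtain ⟨n, f₀, hndvd, rfl⟩ := WfDvdMonoid.max_power_factor' hf hϖC
  have hf₀ : f₀.map (residue A) ≠ 0 := by
    refine fun h => hndvd (C_dvd_of_forall_dvd_coeff fun k => ?_)
    have hk : residue A (coeff k f₀) = 0 := by rw [← coeff_map, h, map_zero]
    rwa [residue_eq_zero_iff, (IsDiscreteValuationRing.irreducible_iff_uniformizer ϖ).mp hϖ,
      Ideal.mem_span_singleton] at hk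
  refine ⟨ϖ ^ n, _, _, pow_ne_zero n hϖ.ne_zero, isDistinguishedAt_weierstrassDistinguished hf₀,
    isUnit_weierstrassUnit hf₀, ?_⟩
  rw [map_pow, mul_assoc, ← eq_weierstrassDistinguished_mul_weierstrassUnit]

theorem span_C_mul_one_add_X_sub_one {a c : A} (hac : c * (1 + a) = 1) :
    Ideal.span {C c * (1 + X) - 1} =
      Ideal.span {((Polynomial.X - Polynomial.C a : Polynomial A) : PowerSeries A)} := by
  have hC : C c * (1 + C a) = 1 := by rw [← map_one C, ← map_add, ← map_mul, hac]
  have h : C c * (1 + X) - 1 =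
      C c * ((Polynomial.X - Polynomial.C a : Polynomial A) : PowerSeries A) := by
    rw [Polynomial.coe_sub, Polynomial.coe_X, Polynomial.coe_C]
    linear_combination hC
  rw [h, Ideal.span_singleton_mul_left_unit ((IsUnit.of_mul_eq_one _ hac).map C)]

variable {I : Ideal A} [IsAdicComplete I A] {a : A}

noncomputable def evalAt (ha : a ∈ I) : PowerSeries A →ₐ[A] A :=
  ((Polynomial.quotientSpanXSubCAlgEquiv a).toAlgHom.comp
    (Polynomial.isDistinguishedAt_X_sub_C ha).algEquivQuotient.symm.toAlgHom).comp
    (Ideal.Quotient.mkₐ A _)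

theorem evalAt_apply (ha : a ∈ I) (f : PowerSeries A) :
    evalAt ha f = Polynomial.quotientSpanXSubCAlgEquiv a
      ((Polynomial.isDistinguishedAt_X_sub_C ha).algEquivQuotient.symm (Ideal.Quotient.mk _ f)) :=
  rfl

theorem evalAt_coe (ha : a ∈ I) (P : Polynomial A) : evalAt ha P = P.eval a := by
  have h : (Polynomial.isDistinguishedAt_X_sub_C ha).algEquivQuotient (Ideal.Quotient.mk _ P) =
      Ideal.Quotient.mk _ (P : PowerSeries A) := rfl
  rw [evalAt_apply, ← h, AlgEquiv.symm_apply_apply, Polynomial.quotientSpanXSubCAlgEquiv_mk]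

theorem ker_evalAt (ha : a ∈ I) :
    RingHom.ker (evalAt ha) =
      Ideal.span {((Polynomial.X - Polynomial.C a : Polynomial A) : PowerSeries A)} := by
  ext f
  rw [RingHom.mem_ker, evalAt_apply, EmbeddingLike.map_eq_zero_iff,
    EmbeddingLike.map_eq_zero_iff, Ideal.Quotient.eq_zero_iff_mem]

theorem evalAt_surjective (ha : a ∈ I) : Function.Surjective (evalAt ha) :=
  fun b => ⟨C b, by simpa using evalAt_coe ha (Polynomial.C b)⟩

end PowerSeries

section Twist

open PowerSeries

variable {A : Type*} [CommRing A] [IsDomain A] [IsDiscreteValuationRing A]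
  [IsAdicComplete (maximalIdeal A) A] [Finite (ResidueField A)]
  {M : Type*} [AddCommGroup M] [Module (PowerSeries A) M] [Module.Finite (PowerSeries A) M]

theorem finite_quotient_twist_of_evalAt_ne_zero {a c : A} (ha : a ∈ maximalIdeal A)
    (hac : c * (1 + a) = 1) {f : PowerSeries A} (hf : f ∈ Module.annihilator (PowerSeries A) M)
    (hfa : evalAt ha f ≠ 0) :
    Finite (M ⧸ Ideal.span {C c * (1 + X) - 1} • (⊤ : Submodule (PowerSeries A) M)) := by
  have : Finite (A ⧸ Ideal.span {evalAt ha f}) :=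
    IsDiscreteValuationRing.finite_quotient (Ideal.span_singleton_eq_bot.not.mpr hfa)
  have := finite_quotient_ker_sup_span (evalAt_surjective ha) f
  rw [ker_evalAt, ← span_C_mul_one_add_X_sub_one hac] at this
  exact finite_quotient_smul_top_of_mem_annihilator hf

theorem finite_setOf_not_finite_quotient_twist (hM : Module.IsTorsion (PowerSeries A) M) :
    {c : A | c - 1 ∈ maximalIdeal A ∧
      ¬ Finite (M ⧸ Ideal.span {C c * (1 + X) - 1} •
        (⊤ : Submodule (PowerSeries A) M))}.Finite := by
  obtain ⟨f, hf_ann, hf⟩ := Submodule.annihilator_top_inter_nonZeroDivisors hM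
  rw [Submodule.annihilator_top] at hf_ann
  obtain ⟨b, P, u, hb, hP, hu, rfl⟩ := exists_eq_C_mul_mul_isUnit (nonZeroDivisors.ne_zero hf)
  refine ((Polynomial.finite_setOfPred_isRoot hP.monic.ne_zero).biUnion
    fun a _ => (subsingleton_setOf_mul_eq_one (1 + a)).finite).subset ?_
  rintro c ⟨hc, hinf⟩
  obtain ⟨a, ha, hac⟩ := exists_mul_one_add_eq_one hc
  have hroot : evalAt ha (C b * P * u) = 0 :=
    not_not.mp fun h => hinf (finite_quotient_twist_of_evalAt_ne_zero ha hac hf_ann h)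
  rw [map_mul, map_mul, ← Polynomial.coe_C, evalAt_coe, evalAt_coe, Polynomial.eval_C] at hroot
  have hPa : P.eval a = 0 :=
    (mul_eq_zero.mp ((mul_eq_zero.mp hroot).resolve_right (hu.map _).ne_zero)).resolve_left hb
  exact Set.mem_biUnion hPa hac

end Twist

/- Dually, `(M(s))^G` is finite iff `X/(cγ - 1)X` is, where `γ = 1 + T` and `c = κ(γ)^s`;
as `s` runs over `ℤ_p`, `c` runs over `1 + pℤ_p`. -/
theorem stmt_12 (p : ℕ) [Fact p.Prime]
    (X : Type*) [AddCommGroup X] [Module (PowerSeries ℤ_[p]) X]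
    [Module.Finite (PowerSeries ℤ_[p]) X]
    (htor : Module.IsTorsion (PowerSeries ℤ_[p]) X) :
    {c : ℤ_[p] | (∃ d : ℤ_[p], c = 1 + p * d) ∧
      ¬ Finite (X ⧸ (Ideal.span
          {PowerSeries.C c * (1 + PowerSeries.X) - 1} •
        (⊤ : Submodule (PowerSeries ℤ_[p]) X)))}.Finite := by
  have : Finite (ResidueField ℤ_[p]) := Finite.of_equiv _ PadicInt.residueField.symm.toEquiv
  refine (finite_setOf_not_finite_quotient_twist htor).subset ?_
  rintro c ⟨⟨d, rfl⟩, hinf⟩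
  refine ⟨?_, hinf⟩
  rw [add_sub_cancel_left, PadicInt.maximalIdeal_eq_span_p]
  exact Ideal.mul_mem_right _ _ (Ideal.mem_span_singleton_self _)
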